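/- The quantum-defect heat deposition is nonnegative: if the pump frequency dominates the signal frequency, ω_p ≥ ω_s, and the pump experiences net absorption at steady state, g_p ≤ 0, then the heat source Q := −(g_p·I_p + g_s·I_s) computed with the steady-state gains satisfies Q ≥ 0. -/
import Mathlib


/-- The quantum-defect heat deposition is nonnegative: if the pump frequency dominates the
signal frequency, `ω_p ≥ ω_s`, and the pump experiences net absorption at steady state,
`g_p ≤ 0`, then the heat source `Q := −(g_p·I_p + g_s·I_s)` computed with the steady-state
gains satisfies `Q ≥ 0`. -/
theorem heat_deposition_nonneg
    (hbar τ Ntot : ℝ) (hhbar : 0 < hbar) (hτ : 0 < τ) (hN : 0 < Ntot)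
    (Is Ip : ℝ) (hIs : 0 ≤ Is) (hIp : 0 ≤ Ip)
    (ωs ωp : ℝ) (hωs : 0 < ωs) (hωp : 0 < ωp)
    (σas σes σap σep : ℝ)
    (hσas : 0 ≤ σas) (hσes : 0 ≤ σes) (hσap : 0 ≤ σap) (hσep : 0 ≤ σep)
    (xs xp : ℝ) (hxs : xs = Is / (hbar * ωs)) (hxp : xp = Ip / (hbar * ωp))
    (Ne : ℝ)
    (hNe : Ne = Ntot * (xs * σas + xp * σap) /
      (1 / τ + (xs * (σas + σes) + xp * (σap + σep))))
    (gs gp : ℝ)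
    (hgs : gs = σes * Ne - σas * (Ntot - Ne))
    (hgp : gp = σep * Ne - σap * (Ntot - Ne))
    (hfreq : ωs ≤ ωp) (habs : gp ≤ 0)
    (Q : ℝ) (hQ : Q = -(gp * Ip + gs * Is)) :
    0 ≤ Q := by
  have hxs0 : 0 ≤ xs := hxs ▸ div_nonneg hIs (by positivity)
  have hxp0 : 0 ≤ xp := hxp ▸ div_nonneg hIp (by positivity)
  have hD : 0 < 1 / τ + (xs * (σas + σes) + xp * (σap + σep)) := by positivity
  have hNe0 : 0 ≤ Ne := by
    rw [hNe]; positivity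
  have hkey : gs * xs + gp * xp = -(Ne / τ) := by
    rw [hgs, hgp, hNe]
    field_simp
    ring
  have h1 : gs * xs + gp * xp ≤ 0 := by
    rw [hkey]
    have : 0 ≤ Ne / τ := div_nonneg hNe0 hτ.le
    linarith
  have hIs' : Is = hbar * ωs * xs := by
    rw [hxs]; field_simp
  have hIp' : Ip = hbar * ωp * xp := by
    rw [hxp]; field_simp
  rw [hQ, hIs', hIp']
  have h2 : 0 ≤ (-gp) * xp * (ωp - ωs) :=
    mul_nonneg (mul_nonneg (by linarith) hxp0) (by linarith)
  nlinarith [mul_le_mul_of_nonneg_left h1 hωs.le, hhbar.le,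
    mul_nonneg hhbar.le h2]
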